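/- Let 𝒥 ⊆ [n-1], ω ∈ ℝ, and A := ω ∑_{u,v} (δ_{j_u j_v} − r_{j_v}/(1 + r_{(𝒥)}·1)) e^{(p)}_{(j_u,j_v)}. Then A^{i+1} = ω^i A for all i ≥ 0, and hence exp(tA) = I + ((e^{ωt} − 1)/ω) A for all t ∈ ℝ. -/

import Mathlib

/-
Write `S` for the sum in `hA`, so that `A = ω • S`. With `X` the matrix whose columns are
`e_{j_u} - r_{j_u} e_n`, `N` the matrix whose rows are `e_{j_v} - e_n` and `C` the coefficient
matrix, `S = X C N` and `N X = I + 1 r_{(𝒥)}`. Sherman–Morrison says `C (N X) = I`, hence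
`S² = X C (N X) C N = S`. So `S` is idempotent, `A ^ (i + 1) = ω ^ (i + 1) • S = ω ^ i • A`, and the
exponential series of `(ω t) • S` collapses to `1 + (e^{ωt} - 1) • S`.
-/

open Matrix

/-- `r_j := p_j / p_n`, with `n = m+1` and last index `Fin.last m`. -/
noncomputable def rRatio (m : ℕ) (p : Fin (m + 1) → ℝ) (j : Fin m) : ℝ :=
  p j.castSucc / p (Fin.last m)

/-- `e^{(p)}_{(j,k)} := (e_j - r_j e_n)(e_k^T - e_n^T)` for `j, k ∈ [n-1]`. -/
noncomputable def epBasis (m : ℕ) (p : Fin (m + 1) → ℝ) (j k : Fin m) :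
    Matrix (Fin (m + 1)) (Fin (m + 1)) ℝ :=
  Matrix.vecMulVec
    (fun a => (if a = j.castSucc then 1 else 0) -
      rRatio m p j * (if a = Fin.last m then 1 else 0))
    (fun b => (if b = k.castSucc then 1 else 0) - (if b = Fin.last m then 1 else 0))

open Nat in
theorem IsIdempotentElem.exp_smul {𝔸 : Type*} [Ring 𝔸] [Algebra ℝ 𝔸] [TopologicalSpace 𝔸]
    [IsTopologicalRing 𝔸] [ContinuousSMul ℝ 𝔸] [T2Space 𝔸] {P : 𝔸} (hP : IsIdempotentElem P)
    (s : ℝ) : NormedSpace.exp (s • P) = 1 + (Real.exp s - 1) • P := by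
  have hReal : HasSum (fun k : ℕ => (k ! : ℝ)⁻¹ * s ^ k) (Real.exp s) := by
    simpa [Real.exp_eq_exp_ℝ] using NormedSpace.exp_series_hasSum_exp' (𝕂 := ℝ) s
  have hSeries : HasSum (fun k : ℕ => (k ! : ℝ)⁻¹ • (s • P) ^ k) (Real.exp s • P + (1 - P)) := by
    -- `(s • P) ^ k = s ^ k • P` for `k ≥ 1`; at `k = 0` the two differ by `1 - P`
    convert (hReal.smul_const P).add (hasSum_ite_eq 0 (1 - P)) using 1
    funext k
    rcases k with _ | k
    · simp
    · simp [smul_pow, hP.pow_succ_eq, mul_smul]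
  rw [congrFun (NormedSpace.exp_eq_tsum ℝ) (s • P), hSeries.tsum_eq]
  module

namespace Matrix

section
variable {ι n R : Type*} [Fintype ι] [CommSemiring R]

theorem sum_smul_vecMulVec_eq_mul (C : Matrix ι ι R) (x y : ι → n → R) :
    ∑ u, ∑ v, C u v • vecMulVec (x u) (y v) = (of x)ᵀ * C * of y := by
  ext a b
  simp only [Matrix.sum_apply, Matrix.smul_apply, vecMulVec_apply, smul_eq_mul, mul_apply,
    transpose_apply, of_apply, Finset.sum_mul]
  rw [Finset.sum_comm]
  exact Finset.sum_congr rfl fun u _ => Finset.sum_congr rfl fun v _ => by ring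

theorem isIdempotentElem_sum_smul_vecMulVec [DecidableEq ι] [Fintype n] {C : Matrix ι ι R}
    {x y : ι → n → R} (hC : C * of (fun v u => y v ⬝ᵥ x u) = 1) :
    IsIdempotentElem (∑ u, ∑ v, C u v • vecMulVec (x u) (y v)) := by
  have hyx : of y * (of x)ᵀ = of (fun v u => y v ⬝ᵥ x u) := by
    ext v u; simp [mul_apply, dotProduct]
  rw [sum_smul_vecMulVec_eq_mul, IsIdempotentElem]
  calc (of x)ᵀ * C * of y * ((of x)ᵀ * C * of y)
      = (of x)ᵀ * (C * (of y * (of x)ᵀ)) * (C * of y) := by simp only [Matrix.mul_assoc]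
    _ = (of x)ᵀ * C * of y := by rw [hyx, hC, Matrix.mul_one, Matrix.mul_assoc]
end

theorem one_sub_smul_vecMulVec_mul_one_add_vecMulVec {ι K : Type*} [Fintype ι]
    [DecidableEq ι] [Field K] (r : ι → K) (hr : 1 + ∑ i, r i ≠ 0) :
    (1 - (1 + ∑ i, r i)⁻¹ • vecMulVec (1 : ι → K) r) * (1 + vecMulVec 1 r) = 1 := by
  have hsq : vecMulVec (1 : ι → K) r * vecMulVec 1 r = (∑ i, r i) • vecMulVec 1 r := by
    rw [vecMulVec_mul_vecMulVec, ← vecMulVec_smul]; simp [dotProduct]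
  rw [sub_mul, one_mul, mul_add, mul_one, smul_mul_assoc, hsq, smul_smul]
  have hscalar : (1 + ∑ i, r i)⁻¹ + (1 + ∑ i, r i)⁻¹ * ∑ i, r i = 1 := by field_simp
  rw [← add_smul, hscalar, one_smul, add_sub_cancel_right]

end Matrix

section
variable {m : ℕ}

def epCol (m : ℕ) (c : ℝ) (j : Fin m) : Fin (m + 1) → ℝ :=
  fun a => (if a = j.castSucc then 1 else 0) - c * (if a = Fin.last m then 1 else 0)

def epRow (m : ℕ) (k : Fin m) : Fin (m + 1) → ℝ :=
  fun b => (if b = k.castSucc then 1 else 0) - (if b = Fin.last m then 1 else 0)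

theorem epBasis_eq_vecMulVec (p : Fin (m + 1) → ℝ) (j k : Fin m) :
    epBasis m p j k = vecMulVec (epCol m (rRatio m p j) j) (epRow m k) :=
  rfl

theorem epRow_dotProduct_epCol (k j : Fin m) (c : ℝ) :
    epRow m k ⬝ᵥ epCol m c j = (if k = j then 1 else 0) + c := by
  have hk : Fin.last m ≠ k.castSucc := (Fin.castSucc_lt_last k).ne'
  simp [epRow, epCol, dotProduct, sub_mul, mul_sub, Finset.sum_sub_distrib, hk,
    Fin.castSucc_inj, eq_comm (a := j)]

theorem isIdempotentElem_sum_epBasis {d : ℕ} {p : Fin (m + 1) → ℝ} (hp : ∀ i, 0 < p i)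
    {J : Fin d → Fin m} (hJ : Function.Injective J) :
    IsIdempotentElem (∑ u : Fin d, ∑ v : Fin d,
      ((if J u = J v then (1 : ℝ) else 0) -
        rRatio m p (J v) / (1 + ∑ w : Fin d, rRatio m p (J w))) •
        epBasis m p (J u) (J v)) := by
  let ρ : Fin d → ℝ := fun w => rRatio m p (J w)
  have hρ : 1 + ∑ w, ρ w ≠ 0 := by
    have : 0 ≤ ∑ w, ρ w := Finset.sum_nonneg fun w _ => (div_pos (hp _) (hp _)).le
    linarith
  have hC : ∀ u v, (if J u = J v then (1 : ℝ) else 0) -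
      rRatio m p (J v) / (1 + ∑ w : Fin d, rRatio m p (J w)) =
      (1 - (1 + ∑ w, ρ w)⁻¹ • vecMulVec (1 : Fin d → ℝ) ρ) u v := by
    intro u v
    simp [ρ, one_apply, hJ.eq_iff, div_eq_inv_mul]
  have hNX : of (fun v u => epRow m (J v) ⬝ᵥ epCol m (ρ u) (J u)) = 1 + vecMulVec 1 ρ := by
    ext v u
    simp [ρ, epRow_dotProduct_epCol, one_apply, hJ.eq_iff]
  simp only [hC, epBasis_eq_vecMulVec]
  refine isIdempotentElem_sum_smul_vecMulVec ?_
  rw [hNX]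
  exact one_sub_smul_vecMulVec_mul_one_add_vecMulVec ρ hρ
end

theorem stmt_10_general (m : ℕ) (p : Fin (m + 1) → ℝ)
    (hp : ∀ i, 0 < p i)
    (d : ℕ) (J : Fin d → Fin m) (hJ : Function.Injective J) (ω : ℝ)
    (A : Matrix (Fin (m + 1)) (Fin (m + 1)) ℝ)
    (hA : A = ω • ∑ u : Fin d, ∑ v : Fin d,
      ((if J u = J v then (1 : ℝ) else 0) -
        rRatio m p (J v) / (1 + ∑ w : Fin d, rRatio m p (J w))) •
        epBasis m p (J u) (J v)) :
    (∀ i : ℕ, A ^ (i + 1) = ω ^ i • A) ∧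
    (∀ t : ℝ, NormedSpace.exp (t • A) =
      1 + ((Real.exp (ω * t) - 1) / ω) • A) := by
  have hS := isIdempotentElem_sum_epBasis hp hJ
  subst hA
  refine ⟨fun i => ?_, fun t => ?_⟩
  · rw [smul_pow, hS.pow_succ_eq, pow_succ, mul_smul]
  · rw [smul_smul, smul_smul, hS.exp_smul]
    rcases eq_or_ne ω 0 with rfl | hω
    · simp
    · rw [div_mul_cancel₀ _ hω, mul_comm]

theorem stmt_10 (m : ℕ) (hm : 1 ≤ m) (p : Fin (m + 1) → ℝ)
    (hp : ∀ i, 0 < p i) (hsum : ∑ i, p i = 1)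
    (d : ℕ) (J : Fin d → Fin m) (hJ : Function.Injective J) (ω : ℝ)
    (A : Matrix (Fin (m + 1)) (Fin (m + 1)) ℝ)
    (hA : A = ω • ∑ u : Fin d, ∑ v : Fin d,
      ((if J u = J v then (1 : ℝ) else 0) -
        rRatio m p (J v) / (1 + ∑ w : Fin d, rRatio m p (J w))) •
        epBasis m p (J u) (J v)) :
    (∀ i : ℕ, A ^ (i + 1) = ω ^ i • A) ∧
    (∀ t : ℝ, NormedSpace.exp (t • A) =
      1 + ((Real.exp (ω * t) - 1) / ω) • A) :=
  stmt_10_general m p hp d J hJ ω A hA
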